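/- Let φ : ℝ → ℝ be twice differentiable, odd, with x·φ''(x) < 0 for all x ≠ 0. Suppose there exist 0 < ε₁ ≤ ε₂ with φ'(ε₁) ≤ 1 and φ(ε₂) ≤ ε₂. Then for all x > ε₂, φ(x) < x, and for all x < -ε₂, φ(x) > x. -/
import Mathlib


theorem gaf_below_identity (φ : ℝ → ℝ)
    (hd1 : Differentiable ℝ φ) (hd2 : Differentiable ℝ (deriv φ))
    (hodd : ∀ x : ℝ, φ (-x) = -φ x)
    (hconc : ∀ x : ℝ, x ≠ 0 → x * deriv (deriv φ) x < 0)
    (ε₁ ε₂ : ℝ) (hε₁ : 0 < ε₁) (hε₁₂ : ε₁ ≤ ε₂)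
    (hslope : deriv φ ε₁ ≤ 1) (hval : φ ε₂ ≤ ε₂) :
    (∀ x : ℝ, x > ε₂ → φ x < x) ∧ (∀ x : ℝ, x < -ε₂ → φ x > x) := by
  -- deriv φ is strictly decreasing on [0, ∞)
  have hanti : StrictAntiOn (deriv φ) (Set.Ici (0:ℝ)) := by
    apply StrictAntiOn.mono (s := Set.Ici (0:ℝ)) ?_ le_rfl
    apply strictAntiOn_of_deriv_neg (convex_Ici 0) (hd2.continuous.continuousOn)
    intro x hx
    rw [interior_Ici] at hx
    have hx0 : (0:ℝ) < x := hx
    have := hconc x (ne_of_gt hx0)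
    nlinarith
  have key : ∀ x : ℝ, x > ε₂ → φ x < x := by
    intro x hx
    have hε₂ : (0:ℝ) < ε₂ := lt_of_lt_of_le hε₁ hε₁₂
    obtain ⟨c, hc, hceq⟩ := exists_deriv_eq_slope φ hx hd1.continuous.continuousOn
      (fun y _ => hd1.differentiableAt.differentiableWithinAt)
    have hc1 : deriv φ c < deriv φ ε₁ := by
      apply hanti (Set.mem_Ici.mpr hε₁.le) (Set.mem_Ici.mpr (by linarith [hc.1] : (0:ℝ) ≤ c))
      linarith [hc.1]
    have hslopec : (φ x - φ ε₂) / (x - ε₂) < 1 := hceq ▸ lt_of_lt_of_le hc1 hslope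
    have hxε : (0:ℝ) < x - ε₂ := by linarith
    rw [div_lt_one hxε] at hslopec
    linarith
  refine ⟨key, fun x hx => ?_⟩
  have := key (-x) (by linarith)
  rw [hodd x] at this
  linarith
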